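/- arXiv:2103.03571 — 3 statements merged into one kernel-verified Lean document; each statement's English description precedes it below -/
import Mathlib

section
/- Confidence controls the robustness probability: under the conditions above, if μ is a probability distribution over X and every coordinate of f is L_f-Lipschitz with 2·L_f·ξ < 1, then μ({x : ∃ x' with d(x,x') ≤ ξ and f̃(x') ≠ f̃(x)}) ≤ (1 − E_{x∼μ}[M(f(x))]) / (1 − 2·L_f·ξ). -/
open MeasureTheory

/-!
If the prediction changes somewhere in the `ξ`-ball around `x`, moving to that point shifts every
score by at most `L ξ` while overtaking the top score, so the margin at `x` is at most `2 L ξ`.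
Hence the non-robust set lies in `{M ≤ 2 L ξ}`, and Markov's inequality for the nonnegative
variable `1 - M` bounds its measure by `(1 - E[M]) / (1 - 2 L ξ)`.
-/

section Markov

variable {α : Type*} [MeasurableSpace α] {μ : Measure α} [IsProbabilityMeasure μ]

theorem measureReal_le_one_sub_integral_div {g : α → ℝ} {s : Set α} {t : ℝ}
    (hg : ∀ x, g x ≤ 1) (hgi : Integrable g μ) (ht : t < 1) (hs : ∀ x ∈ s, g x ≤ t) :
    μ.real s ≤ (1 - ∫ x, g x ∂μ) / (1 - t) := by
  rw [le_div_iff₀ (sub_pos.2 ht), mul_comm]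
  have hsub : s ⊆ {x | 1 - t ≤ 1 - g x} := fun x hx => by
    simpa only [Set.mem_ofPred_eq, sub_le_sub_iff_left] using hs x hx
  calc (1 - t) * μ.real s ≤ (1 - t) * μ.real {x | 1 - t ≤ 1 - g x} :=
        mul_le_mul_of_nonneg_left (measureReal_mono hsub) (sub_nonneg.2 ht.le)
    _ ≤ ∫ x, 1 - g x ∂μ :=
        mul_meas_ge_le_integral_of_nonneg (ae_of_all _ fun x => sub_nonneg.2 (hg x))
          ((integrable_const 1).sub hgi) _
    _ = 1 - ∫ x, g x ∂μ := by
        rw [integral_sub (integrable_const 1) hgi, integral_const, probReal_univ, one_smul]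

end Markov

section Margin

variable {ι : Type*}

/-- With a single class the supremum is over the empty set, where `sSup ∅ = 0`. -/
noncomputable def margin (v : ι → ℝ) (i : ι) : ℝ :=
  v i - sSup (v '' {j | j ≠ i})

theorem margin_le_one {v : ι → ℝ} (hv : ∀ j, v j ∈ Set.Icc (0 : ℝ) 1) (i : ι) :
    margin v i ≤ 1 := by
  have hsup : 0 ≤ sSup (v '' {j | j ≠ i}) :=
    Real.sSup_nonneg (by rintro _ ⟨j, -, rfl⟩; exact (hv j).1)
  unfold margin
  linarith [(hv i).2]

theorem margin_le_two_mul_of_ne_argmax [Finite ι] {v w : ι → ℝ} {ε : ℝ} {i j : ι}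
    (hvw : ∀ k, |v k - w k| ≤ ε) (hj : ∀ k, w k ≤ w j) (hji : j ≠ i) :
    margin v i ≤ 2 * ε := by
  have hvj : v j ≤ sSup (v '' {k | k ≠ i}) :=
    le_csSup (Set.toFinite _).bddAbove ⟨j, hji, rfl⟩
  have hi := (abs_le.1 (hvw i)).2
  have hj' := (abs_le.1 (hvw j)).1
  unfold margin
  linarith [hj i]

end Margin

theorem margin_le_of_dist_le {X ι : Type*} [PseudoMetricSpace X] [Finite ι]
    {f : X → ι → ℝ} {L ξ : ℝ} (hL : 0 ≤ L) (hlip : ∀ i x x', |f x i - f x' i| ≤ L * dist x x')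
    {F : X → ι} (hF : ∀ x j, f x j ≤ f x (F x)) {x x' : X} (hd : dist x x' ≤ ξ)
    (hne : F x' ≠ F x) :
    margin (f x) (F x) ≤ 2 * (L * ξ) :=
  margin_le_two_mul_of_ne_argmax (fun k => (hlip k x x').trans (by gcongr)) (hF x') hne

theorem confidence_controls_robustness_general {X : Type*} [MetricSpace X]
    [MeasurableSpace X] (μ : Measure X) [IsProbabilityMeasure μ]
    {K : ℕ} (f : X → Fin K → ℝ) (L ξ : ℝ) (hL : 0 ≤ L)
    (hLξ : 2 * L * ξ < 1)
    (hrange : ∀ x i, f x i ∈ Set.Icc (0:ℝ) 1)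
    (hlip : ∀ i x x', |f x i - f x' i| ≤ L * dist x x')
    (F : X → Fin K) (hF : ∀ x j, f x j ≤ f x (F x))
    (M : X → ℝ)
    (hM : ∀ x, M x = f x (F x) - sSup ((f x) '' {j | j ≠ F x}))
    (hMint : Integrable M μ) :
    (μ {x | ∃ x', dist x x' ≤ ξ ∧ F x' ≠ F x}).toReal ≤
      (1 - ∫ x, M x ∂μ) / (1 - 2 * L * ξ) := by
  have hMmargin : ∀ x, M x = margin (f x) (F x) := hM
  refine measureReal_le_one_sub_integral_div (fun x => ?_) hMint hLξ ?_
  · exact (hMmargin x).trans_le (margin_le_one (hrange x) _)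
  · rintro x ⟨x', hd, hne⟩
    rw [hMmargin, mul_assoc]
    exact margin_le_of_dist_le hL hlip hF hd hne

/-- Confidence controls the robustness probability: if every coordinate of `f`
is `L`-Lipschitz with `2·L·ξ < 1`, `F` selects an argmax prediction and `M` is
the margin (largest minus second-largest score, in `[0,1]`), then
`μ({x : ∃ x', d(x,x') ≤ ξ ∧ F x' ≠ F x}) ≤ (1 − E_μ[M]) / (1 − 2·L·ξ)`. -/
theorem confidence_controls_robustness {X : Type*} [MetricSpace X]
    [MeasurableSpace X] [BorelSpace X] (μ : Measure X) [IsProbabilityMeasure μ]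
    {K : ℕ} (hK : 2 ≤ K) (f : X → Fin K → ℝ) (L ξ : ℝ) (hL : 0 ≤ L)
    (hξ : 0 < ξ) (hLξ : 2 * L * ξ < 1)
    (hrange : ∀ x i, f x i ∈ Set.Icc (0:ℝ) 1)
    (hlip : ∀ i x x', |f x i - f x' i| ≤ L * dist x x')
    (F : X → Fin K) (hF : ∀ x j, f x j ≤ f x (F x)) (hFmeas : Measurable F)
    (M : X → ℝ)
    (hM : ∀ x, M x = f x (F x) - sSup ((f x) '' {j | j ≠ F x}))
    (hMint : Integrable M μ) :
    (μ {x | ∃ x', dist x x' ≤ ξ ∧ F x' ≠ F x}).toReal ≤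
      (1 - ∫ x, M x ∂μ) / (1 - 2 * L * ξ) :=
  confidence_controls_robustness_general μ f L ξ hL hLξ hrange hlip F hF M hM hMint
end

section
/- Rademacher complexity of the pointwise maximum: for two function classes F₁, F₂ of real-valued functions on X and any sample S of size n, R̂(max(F₁,F₂)|_S) ≤ R̂(F₁|_S) + R̂(F₂|_S), where max(F₁,F₂) = {x ↦ max(f₁(x), f₂(x)) : f₁ ∈ F₁, f₂ ∈ F₂}. -/
open Finset

/-- Empirical Rademacher complexity of a class `F` of real-valued functions on
the sample `x : Fin n → X`. -/
noncomputable def empRad {X : Type*} (n : ℕ) (x : Fin n → X)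
    (F : Set (X → ℝ)) : ℝ :=
  (1 / n) * ((1 / 2 ^ n) * ∑ σ : Fin n → Bool,
    sSup ((fun f : X → ℝ => ∑ j, (if σ j then (1:ℝ) else -1) * f (x j)) '' F))

/-!
Since `max a b = (a + b + |b - a|) / 2`, for every sign vector the supremum over `max(F₁,F₂)` is
at most half the sum of the suprema over `F₁`, `F₂` and `|F₂ - F₁|`. The absolute value is removed
by the contraction principle: pairing sign vectors that differ only in the coordinate `i`, applying
a 1-Lipschitz `φ` to the `i`-th coordinate cannot increase the sum of the two suprema, and doing
this coordinate by coordinate gives `R(φ ∘ V) ≤ R(V)`. Finally `R(F₂ - F₁) ≤ R(F₂) + R(F₁)`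
because `F₁ = -F₁`. Boundedness of the classes keeps all suprema genuine (`sSup` of a set of
reals that is not bounded above is `0`).
-/

open Bornology Function Set
open scoped Pointwise

lemma Bornology.IsBounded.image_of_continuous {E F : Type*} [PseudoMetricSpace E] [ProperSpace E]
    [PseudoMetricSpace F] {s : Set E} {f : E → F} (hs : IsBounded s) (hf : Continuous f) :
    IsBounded (f '' s) :=
  (hs.isCompact_closure.image hf).isBounded.subset (image_mono subset_closure)

lemma Bornology.IsBounded.bddAbove_dotProduct_image {ι : Type*} [Fintype ι] {V : Set (ι → ℝ)}
    (hV : IsBounded V) (w : ι → ℝ) : BddAbove ((w ⬝ᵥ ·) '' V) :=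
  (hV.image_of_continuous (continuous_const.dotProduct continuous_id)).bddAbove

lemma LipschitzWith.ciSup_comp_add_ciSup_neg_comp_le {α : Type*} [Nonempty α] {φ : ℝ → ℝ}
    (hφ : LipschitzWith 1 φ) {p a : α → ℝ} (hpos : BddAbove (range fun g => p g + a g))
    (hneg : BddAbove (range fun g => -p g + a g)) :
    (⨆ g, φ (p g) + a g) + (⨆ g, -φ (p g) + a g) ≤
      (⨆ g, p g + a g) + (⨆ g, -p g + a g) := by
  refine ciSup_add_ciSup_le fun g g' => ?_
  have hφgg' : φ (p g) - φ (p g') ≤ |p g - p g'| := by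
    simpa [Real.dist_eq] using (le_abs_self _).trans (hφ.dist_le_mul (p g) (p g'))
  rcases le_total (p g') (p g) with h | h
  · have := le_ciSup hpos g
    have := le_ciSup hneg g'
    rw [abs_of_nonneg (sub_nonneg.2 h)] at hφgg'
    linarith
  · have := le_ciSup hpos g'
    have := le_ciSup hneg g
    rw [abs_of_nonpos (sub_nonpos.2 h)] at hφgg'
    linarith

lemma sum_update_true_add_update_false {ι M : Type*} [Fintype ι] [DecidableEq ι]
    [AddCommMonoid M] (G : (ι → Bool) → M) (i : ι) :
    ∑ σ : ι → Bool, (G (update σ i true) + G (update σ i false)) =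
      ∑ σ, G σ + ∑ σ, G σ := by
  have hflip : Involutive fun σ : ι → Bool => update σ i (!σ i) := fun σ => by
    simp [update_idem]
  have hperm : ∑ σ : ι → Bool, G (update σ i (!σ i)) = ∑ σ, G σ :=
    Equiv.sum_comp (hflip.toPerm _) G
  calc ∑ σ : ι → Bool, (G (update σ i true) + G (update σ i false))
      = ∑ σ : ι → Bool, (G (update σ i (σ i)) + G (update σ i (!σ i))) :=
        Finset.sum_congr rfl fun σ _ => by cases σ i <;> simp [add_comm]
    _ = ∑ σ, G σ + ∑ σ, G σ := by
        rw [Finset.sum_add_distrib, hperm]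
        simp only [update_eq_self]

section DotProduct

variable {ι : Type*} [Fintype ι] {A B : Set (ι → ℝ)}

lemma sSup_dotProduct_image_sup_le (hA : IsBounded A) (hB : IsBounded B) (hA₀ : A.Nonempty)
    (hB₀ : B.Nonempty) (w : ι → ℝ) :
    sSup ((w ⬝ᵥ ·) '' image2 (· ⊔ ·) A B) ≤
      2⁻¹ * (sSup ((w ⬝ᵥ ·) '' A) + sSup ((w ⬝ᵥ ·) '' B) +
        sSup ((w ⬝ᵥ ·) '' ((abs ∘ ·) '' (B - A)))) := by
  have hBA : IsBounded ((abs ∘ ·) '' (B - A)) :=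
    (isBounded_sub hB hA).image_of_continuous
      (continuous_pi fun j => continuous_abs.comp (continuous_apply j))
  rw [image_image2]
  refine csSup_le (hA₀.image2 hB₀) (forall_mem_image2.2 fun a ha b hb => ?_)
  rw [sup_eq_half_smul_add_add_abs_sub' ℝ, dotProduct_smul, dotProduct_add, dotProduct_add,
    smul_eq_mul]
  gcongr
  · exact le_csSup (hA.bddAbove_dotProduct_image w) (mem_image_of_mem _ ha)
  · exact le_csSup (hB.bddAbove_dotProduct_image w) (mem_image_of_mem _ hb)
  · exact le_csSup (hBA.bddAbove_dotProduct_image w) ⟨_, ⟨b - a, sub_mem_sub hb ha, rfl⟩, rfl⟩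

lemma sSup_dotProduct_image_sub_le (hA : IsBounded A) (hB : IsBounded B) (hA₀ : A.Nonempty)
    (hB₀ : B.Nonempty) (hneg : ∀ a ∈ A, -a ∈ A) (w : ι → ℝ) :
    sSup ((w ⬝ᵥ ·) '' (B - A)) ≤ sSup ((w ⬝ᵥ ·) '' B) + sSup ((w ⬝ᵥ ·) '' A) := by
  rw [← image2_sub, image_image2]
  refine csSup_le (hB₀.image2 hA₀) (forall_mem_image2.2 fun b hb a ha => ?_)
  rw [dotProduct_sub, sub_eq_add_neg, ← dotProduct_neg]
  exact add_le_add (le_csSup (hB.bddAbove_dotProduct_image w) (mem_image_of_mem _ hb))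
    (le_csSup (hA.bddAbove_dotProduct_image w) (mem_image_of_mem _ (hneg a ha)))

end DotProduct

def boolSign (b : Bool) : ℝ := if b then 1 else -1

section Rademacher

variable {ι : Type*} [Fintype ι] [DecidableEq ι]

noncomputable def rademacherSum (V : Set (ι → ℝ)) : ℝ :=
  ∑ σ : ι → Bool, sSup (((boolSign ∘ σ) ⬝ᵥ ·) '' V)

lemma boolSign_comp_update_dotProduct (σ : ι → Bool) (i : ι) (b : Bool) (w : ι → ℝ) :
    (boolSign ∘ update σ i b) ⬝ᵥ w =
      boolSign b * w i + ∑ j ∈ Finset.univ.erase i, boolSign (σ j) * w j := by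
  rw [dotProduct, ← Finset.add_sum_erase _ _ (Finset.mem_univ i)]
  congr 1
  · simp
  · refine Finset.sum_congr rfl fun j hj => ?_
    simp [update_of_ne (Finset.ne_of_mem_erase hj)]

lemma rademacherSum_image_update_le {V : Set (ι → ℝ)} (hV : IsBounded V) (hne : V.Nonempty)
    {φ : ℝ → ℝ} (hφ : LipschitzWith 1 φ) (i : ι) :
    rademacherSum ((fun v => update v i (φ (v i))) '' V) ≤ rademacherSum V := by
  have : Nonempty V := hne.to_subtype
  set a : (ι → Bool) → (ι → ℝ) → ℝ := fun σ v => ∑ j ∈ Finset.univ.erase i, boolSign (σ j) * v j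
  set S : (ℝ → ℝ) → (ι → Bool) → ℝ := fun ψ σ =>
    sSup (((boolSign ∘ σ) ⬝ᵥ ·) '' ((fun v => update v i (ψ (v i))) '' V))
  have hsplit : ∀ σ b (ψ : ℝ → ℝ) (v : ι → ℝ),
      (boolSign ∘ update σ i b) ⬝ᵥ update v i (ψ (v i)) = boolSign b * ψ (v i) + a σ v := by
    intro σ b ψ v
    rw [boolSign_comp_update_dotProduct, update_self]
    congr 1
    exact Finset.sum_congr rfl fun j hj => by rw [update_of_ne (Finset.ne_of_mem_erase hj)]
  have hS : ∀ ψ σ b, S ψ (update σ i b) = ⨆ v : V, boolSign b * ψ (v.1 i) + a σ v := by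
    intro ψ σ b
    simp only [S, image_image, sSup_image', hsplit]
  have hbdd : ∀ σ b, BddAbove (range fun v : V => boolSign b * v.1 i + a σ v) := by
    intro σ b
    have := hV.bddAbove_dotProduct_image (boolSign ∘ update σ i b)
    rw [image_eq_range] at this
    convert this using 3 with v
    simpa using (hsplit σ b id v).symm
  have hpair : ∀ σ, S φ (update σ i true) + S φ (update σ i false) ≤
      S id (update σ i true) + S id (update σ i false) := by
    intro σ
    have hpos := hbdd σ true
    have hneg := hbdd σ false
    simp only [hS, boolSign, Bool.false_eq_true, if_true, if_false, one_mul, neg_one_mul]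
      at hpos hneg ⊢
    exact hφ.ciSup_comp_add_ciSup_neg_comp_le hpos hneg
  have hsum := Finset.sum_le_sum fun σ (_ : σ ∈ Finset.univ) => hpair σ
  rw [sum_update_true_add_update_false, sum_update_true_add_update_false] at hsum
  have hV' : rademacherSum V = ∑ σ, S id σ := by
    simp [S, rademacherSum, update_eq_self]
  change ∑ σ, S φ σ ≤ _
  linarith

theorem rademacherSum_image_comp_le {V : Set (ι → ℝ)} (hV : IsBounded V) {φ : ℝ → ℝ}
    (hφ : LipschitzWith 1 φ) : rademacherSum ((φ ∘ ·) '' V) ≤ rademacherSum V := by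
  rcases V.eq_empty_or_nonempty with rfl | hne
  · simp
  suffices ∀ T : Finset ι,
      rademacherSum ((fun (v : ι → ℝ) j => if j ∈ T then φ (v j) else v j) '' V) ≤
        rademacherSum V by
    simpa [comp_def] using this Finset.univ
  intro T
  induction T using Finset.induction_on with
  | empty => simp
  | insert i T hi ih =>
    have hcomp : (fun (v : ι → ℝ) j => if j ∈ insert i T then φ (v j) else v j) =
        (fun v => update v i (φ (v i))) ∘ fun v j => if j ∈ T then φ (v j) else v j := by
      funext v j
      by_cases hj : j = i
      · subst hj; simp [hi]
      · simp [hj]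
    have hcont : Continuous fun (v : ι → ℝ) j => if j ∈ T then φ (v j) else v j :=
      continuous_pi fun j => by
        split_ifs
        exacts [hφ.continuous.comp (continuous_apply j), continuous_apply j]
    rw [hcomp, image_comp]
    exact (rademacherSum_image_update_le (hV.image_of_continuous hcont) (hne.image _) hφ i).trans ih

theorem rademacherSum_image2_sup_le {A B : Set (ι → ℝ)} (hA : IsBounded A) (hB : IsBounded B)
    (hA₀ : A.Nonempty) (hB₀ : B.Nonempty) (hneg : ∀ a ∈ A, -a ∈ A) :
    rademacherSum (image2 (· ⊔ ·) A B) ≤ rademacherSum A + rademacherSum B := by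
  have hcontr : rademacherSum ((abs ∘ ·) '' (B - A)) ≤ rademacherSum (B - A) :=
    rademacherSum_image_comp_le (isBounded_sub hB hA) lipschitzWith_one_norm
  have hsub : rademacherSum (B - A) ≤ rademacherSum B + rademacherSum A := by
    rw [rademacherSum, rademacherSum, rademacherSum, ← Finset.sum_add_distrib]
    exact Finset.sum_le_sum fun σ _ => sSup_dotProduct_image_sub_le hA hB hA₀ hB₀ hneg _
  calc rademacherSum (image2 (· ⊔ ·) A B)
      ≤ 2⁻¹ * (rademacherSum A + rademacherSum B + rademacherSum ((abs ∘ ·) '' (B - A))) := by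
        simp only [rademacherSum, ← Finset.sum_add_distrib, Finset.mul_sum]
        exact Finset.sum_le_sum fun σ _ => sSup_dotProduct_image_sup_le hA hB hA₀ hB₀ _
    _ ≤ rademacherSum A + rademacherSum B := by linarith

end Rademacher

section Sample

variable {X : Type*} {n : ℕ}

lemma empRad_eq_rademacherSum (x : Fin n → X) (F : Set (X → ℝ)) :
    empRad n x F = 1 / n * (1 / 2 ^ n * rademacherSum ((· ∘ x) '' F)) := by
  simp only [empRad, rademacherSum, image_image]
  rfl

lemma isBounded_image_comp_of_forall_abs_le (x : Fin n → X) {F : Set (X → ℝ)} {C : ℝ}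
    (hF : ∀ f ∈ F, ∀ y, |f y| ≤ C) : IsBounded ((· ∘ x) '' F) := by
  refine isBounded_iff_forall_norm_le.2 ⟨max C 0, ?_⟩
  rintro _ ⟨f, hf, rfl⟩
  exact (pi_norm_le_iff_of_nonneg (le_max_right C 0)).2 fun j =>
    (hF f hf (x j)).trans (le_max_left C 0)

lemma setOf_max_eq_image2_sup (F₁ F₂ : Set (X → ℝ)) :
    {g | ∃ f₁ ∈ F₁, ∃ f₂ ∈ F₂, g = fun y => max (f₁ y) (f₂ y)} = image2 (· ⊔ ·) F₁ F₂ := by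
  ext g
  constructor <;> rintro ⟨f₁, hf₁, f₂, hf₂, rfl⟩ <;> exact ⟨f₁, hf₁, f₂, hf₂, rfl⟩

end Sample

theorem empRad_max_le_general {X : Type*} (n : ℕ) (x : Fin n → X)
    (F₁ F₂ : Set (X → ℝ)) (hne₁ : F₁.Nonempty) (hne₂ : F₂.Nonempty)
    (hb₁ : ∀ f ∈ F₁, ∀ y, |f y| ≤ 1) (hb₂ : ∀ f ∈ F₂, ∀ y, |f y| ≤ 1)
    (hneg₁ : ∀ f ∈ F₁, (fun y => -f y) ∈ F₁) :
    empRad n x {g | ∃ f₁ ∈ F₁, ∃ f₂ ∈ F₂, g = fun y => max (f₁ y) (f₂ y)} ≤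
      empRad n x F₁ + empRad n x F₂ := by
  have hsample : (· ∘ x) '' image2 (· ⊔ ·) F₁ F₂ =
      image2 (· ⊔ ·) ((· ∘ x) '' F₁) ((· ∘ x) '' F₂) :=
    image_image2_distrib fun _ _ => rfl
  have hneg : ∀ a ∈ (· ∘ x) '' F₁, -a ∈ (· ∘ x) '' F₁ := by
    rintro _ ⟨f, hf, rfl⟩
    exact ⟨_, hneg₁ f hf, rfl⟩
  simp only [empRad_eq_rademacherSum, setOf_max_eq_image2_sup, hsample, ← mul_add]
  gcongr
  exact rademacherSum_image2_sup_le (isBounded_image_comp_of_forall_abs_le x hb₁)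
    (isBounded_image_comp_of_forall_abs_le x hb₂) (hne₁.image _) (hne₂.image _) hneg

/-- Rademacher complexity of the pointwise maximum: for nonempty classes
`F₁, F₂` of functions bounded by 1 and closed under negation,
`R̂(max(F₁,F₂)|_S) ≤ R̂(F₁|_S) + R̂(F₂|_S)`, where
`max(F₁,F₂) = {x ↦ max (f₁ x) (f₂ x) : f₁ ∈ F₁, f₂ ∈ F₂}`. -/
theorem empRad_max_le {X : Type*} (n : ℕ) (hn : 0 < n) (x : Fin n → X)
    (F₁ F₂ : Set (X → ℝ)) (hne₁ : F₁.Nonempty) (hne₂ : F₂.Nonempty)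
    (hb₁ : ∀ f ∈ F₁, ∀ y, |f y| ≤ 1) (hb₂ : ∀ f ∈ F₂, ∀ y, |f y| ≤ 1)
    (hneg₁ : ∀ f ∈ F₁, (fun y => -f y) ∈ F₁)
    (hneg₂ : ∀ f ∈ F₂, (fun y => -f y) ∈ F₂) :
    empRad n x {g | ∃ f₁ ∈ F₁, ∃ f₂ ∈ F₂, g = fun y => max (f₁ y) (f₂ y)} ≤
      empRad n x F₁ + empRad n x F₂ :=
  empRad_max_le_general n x F₁ F₂ hne₁ hne₂ hb₁ hb₂ hneg₁
end

section
/- Quadratic network solutions on the source are indexed by a coordinate: let f(x) = xᵀ A x for a symmetric matrix A ∈ ℝ^{d×d}. Suppose f(x) = x₁² − x₂² holds for all x in the set S = {x ∈ {−1,0,1}^d : x₃,…,x_d ∈ {±x₂}} (i.e., x_k = σ_k x₂ for signs σ_k, for all sign patterns and all values x₁, x₂ ∈ {−1,0,1}). Then A is diagonal with A₁₁ = 1 and Σ_{i=2}^d Aᵢᵢ = −1. -/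
/-!
Every `±1` vector lies in the source support and has `x₁² = x₂²`, so the quadratic form vanishes
on the whole cube `{±1}^d`. Its second difference at `𝟏` in the directions `-2eⱼ`, `-2eₖ` is
`8 Aⱼₖ`, so `A` is diagonal; then `xᵀAx = Σ Aᵢᵢ xᵢ²`, and evaluating at `e₁` and at `𝟏` gives
`A₁₁ = 1` and `tr A = 0`.
-/

namespace Matrix

variable {n R : Type*} [Fintype n]

theorem dotProduct_mulVec_add_add_sub [CommRing R] (A : Matrix n n R) (x a b : n → R) :
    (x + a + b) ⬝ᵥ A *ᵥ (x + a + b) - (x + a) ⬝ᵥ A *ᵥ (x + a) - (x + b) ⬝ᵥ A *ᵥ (x + b)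
      + x ⬝ᵥ A *ᵥ x = a ⬝ᵥ A *ᵥ b + b ⬝ᵥ A *ᵥ a := by
  simp only [mulVec_add, add_dotProduct, dotProduct_add]
  ring

theorem single_dotProduct_mulVec_single [CommSemiring R] [DecidableEq n] (A : Matrix n n R)
    (i j : n) (a b : R) : Pi.single i a ⬝ᵥ A *ᵥ Pi.single j b = a * A i j * b := by
  rw [single_dotProduct, mulVec_single]
  simp [mul_assoc]

theorem IsDiag.dotProduct_mulVec_self [CommSemiring R] {A : Matrix n n R} (hA : A.IsDiag)
    (x : n → R) : x ⬝ᵥ A *ᵥ x = ∑ i, A i i * x i ^ 2 := by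
  classical
  conv_lhs => rw [← hA.diagonal_diag]
  simp only [dotProduct, mulVec_diagonal, diag_apply]
  exact Finset.sum_congr rfl fun i _ => by ring

theorem IsSymm.isDiag_of_forall_sign [CommRing R] [NoZeroDivisors R] [CharZero R]
    {A : Matrix n n R} (hA : A.IsSymm)
    (hsign : ∀ x : n → R, (∀ i, x i = 1 ∨ x i = -1) → x ⬝ᵥ A *ᵥ x = 0) : A.IsDiag := by
  classical
  intro j k hjk
  have hflip : ∀ (x : n → R) (l : n), (∀ i, x i = 1 ∨ x i = -1) → x l = 1 →
      ∀ i, (x + Pi.single l (-2) : n → R) i = 1 ∨ (x + Pi.single l (-2) : n → R) i = -1 := by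
    intro x l hx hl i
    rcases eq_or_ne i l with rfl | hil
    · right; simp only [Pi.add_apply, Pi.single_eq_same, hl]; norm_num
    · simpa [Pi.single_eq_of_ne hil] using hx i
  have hsign_one : ∀ i, (1 : n → R) i = 1 ∨ (1 : n → R) i = -1 := fun _ => Or.inl rfl
  have hsign_j := hflip 1 j hsign_one rfl
  have hsign_k := hflip 1 k hsign_one rfl
  have hsign_jk := hflip _ k hsign_j (by simp [Pi.single_eq_of_ne hjk.symm])
  have hdiff := A.dotProduct_mulVec_add_add_sub 1 (Pi.single j (-2)) (Pi.single k (-2))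
  rw [hsign _ hsign_jk, hsign _ hsign_j, hsign _ hsign_k, hsign _ hsign_one,
    single_dotProduct_mulVec_single, single_dotProduct_mulVec_single, hA.apply j k] at hdiff
  have h8 : (8 : R) * A j k = 0 := by linear_combination -hdiff
  simpa using h8

end Matrix

open Finset Matrix

/-- Quadratic network solutions on the source are indexed by a coordinate: if
the quadratic form `x ↦ xᵀ A x` of a symmetric matrix `A` agrees with
`x₁² − x₂²` on all points of the structured source support (coordinates in
`{−1,0,1}` with coordinates `3,…,d` equal to `±x₂`), then `A` is diagonal with
`A₁₁ = 1` and `Σ_{i=2}^d Aᵢᵢ = −1`. -/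
theorem quadratic_source_solutions {d : ℕ} (hd : 2 ≤ d)
    (A : Matrix (Fin d) (Fin d) ℝ) (hsymm : A.IsSymm)
    (hfit : ∀ x : Fin d → ℝ,
      (∀ i, x i = -1 ∨ x i = 0 ∨ x i = 1) →
      (∀ k : Fin d, 2 ≤ (k : ℕ) →
        x k = x ⟨1, by omega⟩ ∨ x k = -(x ⟨1, by omega⟩)) →
      dotProduct x (A.mulVec x) =
        (x ⟨0, by omega⟩) ^ 2 - (x ⟨1, by omega⟩) ^ 2) :
    (∀ j k, j ≠ k → A j k = 0) ∧
      A ⟨0, by omega⟩ ⟨0, by omega⟩ = 1 ∧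
      ∑ i ∈ univ.erase (⟨0, by omega⟩ : Fin d), A i i = -1 := by
  set i₀ : Fin d := ⟨0, by omega⟩
  set i₁ : Fin d := ⟨1, by omega⟩
  have hsign : ∀ x : Fin d → ℝ, (∀ i, x i = 1 ∨ x i = -1) → x ⬝ᵥ A *ᵥ x = 0 := by
    intro x hx
    have hsq : ∀ i, x i ^ 2 = 1 := fun i => by rcases hx i with h | h <;> simp [h]
    rw [hfit x (fun i => by rcases hx i with h | h <;> simp [h])
      (fun k _ => sq_eq_sq_iff_eq_or_eq_neg.1 ((hsq k).trans (hsq i₁).symm)), hsq, hsq, sub_self]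
  have hdiag : A.IsDiag := hsymm.isDiag_of_forall_sign hsign
  have hA₀ : A i₀ i₀ = 1 := by
    have hi₁ : i₁ ≠ i₀ := by simp [i₀, i₁, Fin.ext_iff]
    have h := hfit (Pi.single i₀ 1) (fun i => by rcases eq_or_ne i i₀ with rfl | h <;> simp [*])
      (fun k hk => Or.inl (by rw [Pi.single_eq_of_ne (fun h => by simp [h, i₀] at hk),
        Pi.single_eq_of_ne hi₁]))
    simpa [hdiag.dotProduct_mulVec_self, Pi.single_apply, hi₁] using h
  have htrace : ∑ i, A i i = 0 := by
    simpa [hdiag.dotProduct_mulVec_self] using hsign 1 fun _ => Or.inl rfl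
  refine ⟨hdiag, hA₀, ?_⟩
  rw [← add_sum_erase univ (fun i => A i i) (mem_univ i₀), hA₀] at htrace
  linarith
end
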